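/- For every n ≥ 4, w(n,0) = 2·w(n-1,0) - 2·w(n-3,0) + w(n-4,0), where w(n,0) is the number of compositions of n with all parts in {1,2} and zero water cells. -/

import Mathlib

/-- A composition of `n`: a list of positive integers summing to `n`. -/
def IsComposition (n : ℕ) (l : List ℕ) : Prop :=
  (∀ x ∈ l, 0 < x) ∧ l.sum = n

/-- All parts of the list lie in {1, 2}. -/
def Parts12 (l : List ℕ) : Prop := ∀ x ∈ l, x = 1 ∨ x = 2

/-- Number of water cells: parts equal to 1 with a part 2 strictly before
and a part 2 strictly after. -/
noncomputable def waterCells (l : List ℕ) : ℕ :=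
  {i : Fin l.length | l.get i = 1 ∧ (∃ j : Fin l.length, j < i ∧ l.get j = 2) ∧
    (∃ j : Fin l.length, i < j ∧ l.get j = 2)}.ncard

/-- `w n k`: number of compositions of `n` with parts in {1,2} and exactly `k` water cells. -/
noncomputable def w (n k : ℕ) : ℕ :=
  {l : List ℕ | Parts12 l ∧ l.sum = n ∧ waterCells l = k}.ncard

/-- Diagonal sums of the water-cell array. -/
noncomputable def d (n : ℕ) : ℕ := ∑ k ∈ Finset.range (n + 1), w (n - k) k

/-- All internal parts (other than the first and last) are even. -/
def InternalEven (l : List ℕ) : Prop := ∀ x ∈ (l.drop 1).dropLast, Even x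

/-!
A composition into parts 1 and 2 has no water cell exactly when it has the shape `1^a 2^b 1^c`.
Apart from the all-ones composition, such a composition of `n` is determined by its number
`b ≥ 1` of twos and its number `a ≤ n - 2b` of leading ones, so
`w n 0 = 1 + ∑_{b ≥ 1} (n - 2b + 1)`.
Hence `w (n + 2) 0 = w n 0 + (n + 1)`, and the recurrence is the second difference of this:
`(n - 1) - 2 (n - 2) + (n - 3) = 0`.
-/

def plateau (a b c : ℕ) : List ℕ :=
  List.replicate a 1 ++ List.replicate b 2 ++ List.replicate c 1

def IsWaterCell (l : List ℕ) (i : Fin l.length) : Prop :=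
  l.get i = 1 ∧ (∃ j : Fin l.length, j < i ∧ l.get j = 2) ∧
    (∃ j : Fin l.length, i < j ∧ l.get j = 2)

theorem waterCells_eq_zero_iff {l : List ℕ} : waterCells l = 0 ↔ ∀ i, ¬IsWaterCell l i := by
  rw [waterCells, Set.ncard_eq_zero (Set.toFinite _), Set.eq_empty_iff_forall_notMem]
  rfl

theorem IsWaterCell.cons {x : ℕ} {l : List ℕ} {i : Fin l.length} (h : IsWaterCell l i) :
    IsWaterCell (x :: l) i.succ := by
  obtain ⟨hi, ⟨j, hji, hj⟩, ⟨k, hik, hk⟩⟩ := h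
  exact ⟨by simpa using hi, ⟨j.succ, by simpa using hji, by simpa using hj⟩,
    ⟨k.succ, by simpa using hik, by simpa using hk⟩⟩

theorem length_plateau (a b c : ℕ) : (plateau a b c).length = a + b + c := by
  simp [plateau, Nat.add_assoc]

theorem getElem_plateau {a b c p : ℕ} (hp : p < (plateau a b c).length) :
    (plateau a b c)[p] = if a ≤ p ∧ p < a + b then 2 else 1 := by
  simp only [plateau, List.getElem_append, List.length_append, List.length_replicate,
    List.getElem_replicate]
  split_ifs <;> omega

theorem parts12_plateau (a b c : ℕ) : Parts12 (plateau a b c) := by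
  intro x hx
  simp only [plateau, List.mem_append, List.mem_replicate] at hx
  omega

theorem sum_plateau (a b c : ℕ) : (plateau a b c).sum = a + 2 * b + c := by
  simp [plateau]; ring

theorem count_two_plateau (a b c : ℕ) : (plateau a b c).count 2 = b := by
  simp [plateau, List.count_replicate]

theorem idxOf_two_plateau (a c : ℕ) {b : ℕ} (hb : 0 < b) : (plateau a b c).idxOf 2 = a := by
  obtain ⟨b, rfl⟩ := Nat.exists_eq_add_of_lt hb
  rw [plateau, List.append_assoc, List.idxOf_append_of_notMem (by simp [List.mem_replicate])]
  simp [List.replicate_succ, List.idxOf_cons_self]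

theorem not_isWaterCell_plateau (a b c : ℕ) (i : Fin (plateau a b c).length) :
    ¬IsWaterCell (plateau a b c) i := by
  rintro ⟨hi, ⟨j, hji, hj⟩, ⟨k, hik, hk⟩⟩
  simp only [List.get_eq_getElem, getElem_plateau] at hi hj hk
  rw [Fin.lt_def] at hji hik
  split_ifs at hi hj hk <;> omega

theorem plateau_inj {a b c a' b' c' : ℕ} (hb : 0 < b) (h : plateau a b c = plateau a' b' c') :
    a = a' ∧ b = b' ∧ c = c' := by
  have hb' : b = b' := by rw [← count_two_plateau a b c, h, count_two_plateau]
  subst hb'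
  have ha : a = a' := by rw [← idxOf_two_plateau a c hb, h, idxOf_two_plateau a' c' hb]
  have hlen := congrArg List.length h
  simp only [length_plateau] at hlen
  omega

theorem exists_eq_plateau {l : List ℕ} (hl : Parts12 l) (hdry : ∀ i, ¬IsWaterCell l i) :
    ∃ a b c, l = plateau a b c := by
  induction l with
  | nil => exact ⟨0, 0, 0, rfl⟩
  | cons x t ih =>
    obtain ⟨a, b, c, rfl⟩ := ih (fun y hy => hl y (List.mem_cons_of_mem x hy))
      fun i hi => hdry i.succ hi.cons
    rcases hl x List.mem_cons_self with rfl | rfl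
    · exact ⟨a + 1, b, c, rfl⟩
    rcases Nat.eq_zero_or_pos a with rfl | ha
    · exact ⟨0, b + 1, c, rfl⟩
    rcases Nat.eq_zero_or_pos b with rfl | hb
    · exact ⟨0, 1, a + c, by simp [plateau]⟩
    -- the first `1` of `plateau a b c` is a water cell between the leading `2` and its first `2`
    exfalso
    have hlen : (2 :: plateau a b c).length = a + b + c + 1 := by simp [length_plateau]
    refine hdry ⟨1, by omega⟩ ⟨?_, ⟨⟨0, by omega⟩, Fin.mk_lt_mk.mpr zero_lt_one, rfl⟩,
      ⟨⟨a + 1, by omega⟩, Fin.mk_lt_mk.mpr (by omega), ?_⟩⟩ <;>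
    simp only [List.get_eq_getElem, List.getElem_cons_succ, getElem_plateau] <;>
    split_ifs <;> omega

theorem parts12_and_waterCells_eq_zero_iff {l : List ℕ} :
    Parts12 l ∧ waterCells l = 0 ↔ ∃ a b c, l = plateau a b c := by
  rw [waterCells_eq_zero_iff]
  constructor
  · exact fun ⟨hl, hdry⟩ => exists_eq_plateau hl hdry
  · rintro ⟨a, b, c, rfl⟩
    exact ⟨parts12_plateau a b c, not_isWaterCell_plateau a b c⟩

def dryCompositions (n : ℕ) : Finset (List ℕ) :=
  insert (List.replicate n 1) <|
    ((Finset.range (n / 2)).sigma fun b => Finset.range (n - 2 * (b + 1) + 1)).image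
      fun p => plateau p.2 (p.1 + 1) (n - 2 * (p.1 + 1) - p.2)

theorem coe_dryCompositions (n : ℕ) :
    (dryCompositions n : Set (List ℕ)) = {l | Parts12 l ∧ l.sum = n ∧ waterCells l = 0} := by
  ext l
  simp only [dryCompositions, Finset.coe_insert, Finset.coe_image, Set.mem_insert_iff,
    Set.mem_image, Finset.mem_coe, Finset.mem_sigma, Finset.mem_range, Set.mem_ofPred_eq,
    and_left_comm (b := l.sum = n), parts12_and_waterCells_eq_zero_iff]
  constructor
  · rintro (rfl | ⟨⟨b, a⟩, ⟨hb, ha⟩, rfl⟩)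
    · exact ⟨by simp, n, 0, 0, by simp [plateau]⟩
    · exact ⟨by rw [sum_plateau]; omega, _, _, _, rfl⟩
  · rintro ⟨rfl, a, b, c, rfl⟩
    rcases Nat.eq_zero_or_pos b with rfl | hb
    · left
      simp [plateau]
    · right
      refine ⟨⟨b - 1, a⟩, ⟨?_, ?_⟩, ?_⟩ <;> simp only [sum_plateau]
      · omega
      · omega
      · congr 1 <;> omega

theorem card_dryCompositions (n : ℕ) :
    (dryCompositions n).card = ∑ b ∈ Finset.range (n / 2), (n - 2 * (b + 1) + 1) + 1 := by
  rw [dryCompositions, Finset.card_insert_of_notMem, Finset.card_image_of_injOn,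
    Finset.card_sigma]
  · simp only [Finset.card_range]
  · rintro ⟨b, a⟩ - ⟨b', a'⟩ - h
    obtain ⟨ha, hb, -⟩ := plateau_inj (Nat.succ_pos b) h
    rw [Sigma.mk.injEq]
    exact ⟨Nat.succ.inj hb, heq_of_eq ha⟩
  · simp only [Finset.mem_image, not_exists, not_and]
    intro p _ h
    have := congrArg (List.count 2) h
    simp [count_two_plateau, List.count_replicate] at this

theorem w_zero_eq_sum (n : ℕ) :
    w n 0 = ∑ b ∈ Finset.range (n / 2), (n - 2 * (b + 1) + 1) + 1 := by
  rw [w, ← coe_dryCompositions, Set.ncard_coe_finset, card_dryCompositions]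

theorem w_add_two_zero (n : ℕ) : w (n + 2) 0 = w n 0 + (n + 1) := by
  rw [w_zero_eq_sum, w_zero_eq_sum, Nat.add_div_right n two_pos, Finset.sum_range_succ']
  have hshift : ∀ b, n + 2 - 2 * (b + 1 + 1) + 1 = n - 2 * (b + 1) + 1 := fun b => by omega
  simp only [hshift]
  omega

theorem stmt5 (n : ℕ) (hn : 4 ≤ n) :
    (w n 0 : ℤ) = 2 * w (n - 1) 0 - 2 * w (n - 3) 0 + w (n - 4) 0 := by
  obtain ⟨m, rfl⟩ := Nat.exists_eq_add_of_le' hn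
  have h4 : w (m + 4) 0 = w (m + 2) 0 + (m + 3) := w_add_two_zero (m + 2)
  have h3 : w (m + 3) 0 = w (m + 1) 0 + (m + 2) := w_add_two_zero (m + 1)
  have h2 : w (m + 2) 0 = w m 0 + (m + 1) := w_add_two_zero m
  rw [show m + 4 - 1 = m + 3 by omega, show m + 4 - 3 = m + 1 by omega, Nat.add_sub_cancel]
  omega
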